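/- arXiv:1801.08719 — 6 statements merged into one kernel-verified Lean document; each statement's English description precedes it below -/
import Mathlib

section
/- Let A be a unital associative ℂ-algebra with dim_ℂ A < 2^ℵ₀ (i.e., strictly less than the cardinality of the continuum), and let M be a simple left A-module. Then every A-module endomorphism of M is multiplication by a complex scalar, i.e., End_A(M) = ℂ. -/
open Polynomial

/-- Division ring version of `Transcendental.linearIndependent_sub_inv`. -/
theorem transcendental_linearIndependent_sub_inv
    {F D : Type*} [Field F] [DivisionRing D] [Algebra F D] {x : D}
    (H : Transcendental F x) :
    LinearIndependent F fun a : F ↦ (x - algebraMap F D a)⁻¹ := by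
  classical
  rw [transcendental_iff] at H
  refine linearIndependent_iff'.2 fun s m hm i hi ↦ ?_
  have hnz (a : F) : x - algebraMap F D a ≠ 0 := fun h ↦
    X_sub_C_ne_zero a <| H (X - C a) (by simp [h])
  have haev (a : F) : aeval x (X - C a) = x - algebraMap F D a := by simp
  let b := aeval x (∏ j ∈ s, (X - C j))
  have h1 : ∀ i ∈ s, m i • (b * (x - algebraMap F D i)⁻¹) =
      m i • aeval x (∏ j ∈ s.erase i, (X - C j)) := fun i hi ↦ by
    have hb : b = aeval x (∏ j ∈ s.erase i, (X - C j)) * (x - algebraMap F D i) := by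
      rw [show b = aeval x (∏ j ∈ s, (X - C j)) from rfl, ← s.prod_erase_mul _ hi,
        map_mul, haev]
    rw [hb, mul_inv_cancel_right₀ (hnz i)]
  replace hm := congr(b * $(hm))
  simp_rw [mul_zero, Finset.mul_sum, mul_smul_comm, Finset.sum_congr rfl h1] at hm
  let p : Polynomial F := s.sum fun i ↦ .C (m i) * (s.erase i).prod fun j ↦ .X - .C j
  have hp : aeval x p = 0 := by
    rw [show (0 : D) = ∑ i ∈ s, m i • aeval x (∏ j ∈ s.erase i, (X - C j)) from hm.symm]
    simp_rw [p, map_sum, map_mul, aeval_C, Algebra.smul_def]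
  replace hm := congr(Polynomial.aeval i $(H p hp))
  have h2 : ∀ j ∈ s.erase i, m j * ((s.erase j).prod fun x ↦ i - x) = 0 := fun j hj ↦ by
    have := Finset.mem_erase_of_ne_of_mem (Finset.ne_of_mem_erase hj).symm hi
    simp_rw [← (s.erase j).prod_erase_mul _ this, sub_self, mul_zero]
  simp_rw [map_zero, p, map_sum, map_mul, map_prod, map_sub, aeval_X,
    aeval_C, Algebra.algebraMap_self_apply, ← s.sum_erase_add _ hi,
    Finset.sum_eq_zero h2, zero_add] at hm
  exact eq_zero_of_ne_zero_of_mul_right_eq_zero (Finset.prod_ne_zero_iff.2 fun j hj ↦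
    sub_ne_zero.2 (Finset.ne_of_mem_erase hj).symm) hm

/-- An element of a division algebra over an algebraically closed field which is algebraic
is a scalar. -/
theorem algebraic_eq_algebraMap
    {F D : Type*} [Field F] [IsAlgClosed F] [DivisionRing D] [Algebra F D] {x : D}
    (p : Polynomial F) (hp : p ≠ 0) (hev : Polynomial.aeval x p = 0) :
    ∃ c : F, x = algebraMap F D c := by
  classical
  have key : ∀ n (p : Polynomial F), p.natDegree ≤ n → p ≠ 0 → Polynomial.aeval x p = 0 →
      ∃ c : F, x = algebraMap F D c := by
    intro n
    induction n with
    | zero =>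
      intro p hdeg hp hev
      exfalso
      rw [Polynomial.eq_C_of_natDegree_eq_zero (Nat.le_zero.1 hdeg)] at hev hp
      rw [Polynomial.aeval_C] at hev
      exact hp (by simpa using congrArg Polynomial.C ((_root_.map_eq_zero _).1 hev))
    | succ n ih =>
      intro p hdeg hp hev
      rcases Nat.eq_zero_or_pos p.natDegree with h0 | h0
      · exfalso
        rw [Polynomial.eq_C_of_natDegree_eq_zero h0] at hev hp
        rw [Polynomial.aeval_C] at hev
        exact hp (by simpa using congrArg Polynomial.C ((_root_.map_eq_zero _).1 hev))
      · obtain ⟨c, hc⟩ := IsAlgClosed.exists_root p (fun hdeg0 ↦ by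
          have := Polynomial.natDegree_eq_zero_iff_degree_le_zero.2 (le_of_eq hdeg0)
          omega)
        obtain ⟨q, hq⟩ := Polynomial.dvd_iff_isRoot.2 hc
        have hqne : q ≠ 0 := fun h ↦ hp (by simp [hq, h])
        rw [hq, map_mul] at hev
        rcases mul_eq_zero.1 hev with h | h
        · exact ⟨c, by rwa [map_sub, Polynomial.aeval_X, Polynomial.aeval_C, sub_eq_zero] at h⟩
        · refine ih q ?_ hqne h
          have := Polynomial.natDegree_mul (Polynomial.X_sub_C_ne_zero c) hqne
          rw [← hq, Polynomial.natDegree_X_sub_C] at this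
          omega
  exact key p.natDegree p le_rfl hp hev

/-- Schur's lemma for algebras of small dimension: if `A` is a unital associative
`ℂ`-algebra with `dim_ℂ A < 2^ℵ₀` and `M` is a simple left `A`-module, then every
`A`-module endomorphism of `M` is multiplication by a complex scalar. -/
theorem schur_small_dimension
    (A : Type*) [Ring A] [Algebra ℂ A]
    (M : Type*) [AddCommGroup M] [Module ℂ M] [Module A M] [IsScalarTower ℂ A M]
    (hA : Module.rank ℂ A < Cardinal.continuum)
    (hM : IsSimpleModule A M)
    (f : M →ₗ[A] M) :
    ∃ c : ℂ, ∀ m : M, f m = c • m := by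
  classical
  have : Nontrivial M := IsSimpleModule.nontrivial A M
  obtain ⟨m₀, hm₀⟩ := exists_ne (0 : M)
  -- evaluation at m₀ is an injective ℂ-linear map End → M
  let ev : (M →ₗ[A] M) →ₗ[ℂ] M :=
    { toFun := fun g ↦ g m₀
      map_add' := fun g h ↦ rfl
      map_smul' := fun c g ↦ rfl }
  have hev_inj : Function.Injective ev := by
    intro g h hgh
    by_contra hne
    have : g - h ≠ 0 := sub_ne_zero.2 (fun e ↦ hne (by rw [e]))
    have hinj := (LinearMap.injective_or_eq_zero (g - h)).resolve_right this
    exact hm₀ (hinj (by simpa using sub_eq_zero.2 (show g m₀ = h m₀ from hgh) : (g - h) m₀ = (g - h) 0))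
  -- the A-span of m₀ is everything, so rank ℂ M ≤ rank ℂ A
  let sp : A →ₗ[ℂ] M :=
    { toFun := fun a ↦ a • m₀
      map_add' := fun a b ↦ add_smul a b m₀
      map_smul' := fun c a ↦ smul_assoc c a m₀ }
  have hsp_surj : Function.Surjective sp := by
    intro m
    have hspan : Submodule.span A {m₀} = ⊤ := by
      rcases hM.eq_bot_or_eq_top (Submodule.span A {m₀}) with h | h
      · exact absurd (h ▸ Submodule.mem_span_singleton_self m₀) (by simpa using hm₀)
      · exact h
    have : m ∈ Submodule.span A {m₀} := hspan ▸ Submodule.mem_top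
    obtain ⟨a, ha⟩ := Submodule.mem_span_singleton.1 this
    exact ⟨a, ha⟩
  have hMrank : Module.rank ℂ M < Cardinal.continuum := by
    have h1 := LinearMap.lift_rank_le_of_surjective sp hsp_surj
    exact Cardinal.lift_lt_continuum.1
      (h1.trans_lt (Cardinal.lift_lt_continuum.2 hA))
  have hrank : Module.rank ℂ (M →ₗ[A] M) < Cardinal.continuum :=
    lt_of_le_of_lt (LinearMap.rank_le_of_injective ev hev_inj) hMrank
  -- f is algebraic over ℂ
  have halg : ¬ Transcendental ℂ f := by
    intro H
    have hli := transcendental_linearIndependent_sub_inv (D := M →ₗ[A] M) H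
    have h1 := hli.cardinal_lift_le_rank
    rw [Cardinal.mk_complex, Cardinal.lift_continuum] at h1
    exact absurd (h1.trans_lt (Cardinal.lift_lt_continuum.2 hrank)) (lt_irrefl _)
  rw [Transcendental, not_not, IsAlgebraic] at halg
  obtain ⟨p, hp, hev0⟩ := halg
  obtain ⟨c, hc⟩ := algebraic_eq_algebraMap p hp hev0
  exact ⟨c, fun m ↦ by rw [hc]; exact rfl⟩
end

section
/- Every division algebra over ℂ whose dimension over ℂ is strictly less than the cardinality of ℂ (equivalently, less than 2^ℵ₀) is equal to ℂ, i.e., every element is a complex scalar multiple of the identity. -/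
open Polynomial

/-- Version of `Transcendental.linearIndependent_sub_inv` for division rings. -/
theorem Transcendental.linearIndependent_sub_inv'
    {F E : Type*} [Field F] [DivisionRing E] [Algebra F E] {x : E} (H : Transcendental F x) :
    LinearIndependent F fun a ↦ (x - algebraMap F E a)⁻¹ := by
  classical
  rw [transcendental_iff] at H
  refine linearIndependent_iff'.2 fun s m hm i hi ↦ ?_
  have hnz (a : F) : x - algebraMap F E a ≠ 0 := fun h ↦
    X_sub_C_ne_zero a <| H (X - C a) (by simp [h])
  set q : F → F[X] := fun i ↦ (s.erase i).prod fun j ↦ .X - .C j with hq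
  set Q : F[X] := s.prod fun j ↦ .X - .C j with hQ
  have hQq : ∀ i ∈ s, Q = q i * (.X - .C i) := fun i hi ↦ by
    rw [hq, hQ, Finset.prod_erase_mul _ _ hi]
  have h1 : ∀ i ∈ s, Polynomial.aeval x Q * (x - algebraMap F E i)⁻¹ = Polynomial.aeval x (q i) := fun i hi ↦ by
    rw [hQq i hi, map_mul, map_sub, aeval_X, aeval_C, mul_inv_cancel_right₀ (hnz i)]
  let p : F[X] := s.sum fun i ↦ .C (m i) * q i
  have hp : Polynomial.aeval x p = 0 := by
    have : Polynomial.aeval x p = Polynomial.aeval x Q * s.sum fun i ↦ m i • (x - algebraMap F E i)⁻¹ := by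
      rw [Finset.mul_sum]
      simp_rw [p, map_sum, map_mul, aeval_C, ← Algebra.smul_def, mul_smul_comm]
      exact Finset.sum_congr rfl fun i hi ↦ by rw [h1 i hi]
    rw [this, hm, mul_zero]
  have hp0 : p = 0 := H p hp
  have := congr(Polynomial.eval i $(hp0))
  have h2 : ∀ j ∈ s.erase i, m j * ((s.erase j).prod fun y ↦ i - y) = 0 := fun j hj ↦ by
    have := Finset.mem_erase_of_ne_of_mem (Finset.ne_of_mem_erase hj).symm hi
    simp_rw [← (s.erase j).prod_erase_mul _ this, sub_self, mul_zero]
  simp_rw [eval_zero, p, eval_finset_sum, eval_mul, eval_C, hq, eval_prod, eval_sub,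
    eval_X, eval_C, ← s.sum_erase_add _ hi, Finset.sum_eq_zero h2, zero_add] at this
  exact eq_zero_of_ne_zero_of_mul_right_eq_zero (Finset.prod_ne_zero_iff.2 fun j hj ↦
    sub_ne_zero.2 (Finset.ne_of_mem_erase hj).symm) this

/-- Every division algebra over `ℂ` whose `ℂ`-dimension is strictly less than the
cardinality of the continuum equals `ℂ`: the structure map `ℂ → D` is surjective. -/
theorem divisionAlgebra_small_dimension_eq_complex
    (D : Type*) [DivisionRing D] [Algebra ℂ D]
    (hD : Module.rank ℂ D < Cardinal.continuum) :
    Function.Surjective (algebraMap ℂ D) := by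
  have : Algebra.IsIntegral ℂ D := by
    constructor
    intro x
    by_contra h
    have H : Transcendental ℂ x := fun ha => h ha.isIntegral
    have hli := H.linearIndependent_sub_inv'
    have hle := hli.cardinal_lift_le_rank
    simp only [Cardinal.mk_complex, Cardinal.lift_uzero, Cardinal.lift_continuum] at hle
    exact absurd (hle.trans_lt hD) (lt_irrefl _)
  exact IsAlgClosed.algebraMap_bijective_of_isIntegral.2
end

section
/- Let A be a unital ℂ-algebra with dim_ℂ A < 2^ℵ₀. If A/Jac(A) satisfies the standard polynomial identity S_{2n} (i.e., S_{2n}(a_1,…,a_{2n}) ∈ Jac(A) for all a_i ∈ A), then every simple left A-module has ℂ-dimension at most n. -/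
open scoped BigOperators

universe u

/-- Evaluation of the `n`-th standard polynomial
`S_n(x_1,…,x_n) = Σ_σ sgn(σ) x_{σ(1)} ⋯ x_{σ(n)}` on inputs from a ring. -/
noncomputable def standardPolyEval {R : Type*} [Ring R] (n : ℕ) (T : Fin n → R) : R :=
  ∑ σ : Equiv.Perm (Fin n), ((Equiv.Perm.sign σ : ℤˣ) : ℤ) • (List.ofFn fun i => T (σ i)).prod

theorem staircase_comb (n : ℕ) (τ : Equiv.Perm (Fin (2*n))) (st : ℕ → ℕ) (h0 : st 0 = 0)
    (hc : ∀ (t : ℕ) (ht : t < 2*n),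
      ((τ ⟨t, ht⟩ : ℕ))/2 = st t ∧ st (t+1) = (((τ ⟨t, ht⟩ : ℕ)) + 1)/2) :
    τ = 1 := by
  have mono : ∀ t₁ t₂, t₁ ≤ t₂ → t₂ ≤ 2*n → st t₁ ≤ st t₂ := by
    intro t₁ t₂ h12 h2
    induction t₂ with
    | zero => have : t₁ = 0 := by omega
              simp [this]
    | succ u ih =>
      rcases Nat.lt_or_ge t₁ (u+1) with h | h
      · have hu : u < 2*n := by omega
        obtain ⟨c1, c2⟩ := hc u hu
        have h1 : st t₁ ≤ st u := ih (by omega) (by omega)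
        omega
      · have : t₁ = u + 1 := by omega
        rw [this]
  have main : ∀ t (ht : t < 2*n), (∀ s (hs : s < 2*n), s < t → τ ⟨s, hs⟩ = ⟨s, hs⟩) →
      τ ⟨t, ht⟩ = ⟨t, ht⟩ := by
    intro t ht ih
    have hst : st t = t/2 := by
      rcases Nat.eq_zero_or_pos t with h | h
      · subst h; simpa using h0
      · have ht1 : t - 1 < 2*n := by omega
        obtain ⟨c1, c2⟩ := hc (t-1) ht1
        rw [ih (t-1) ht1 (by omega)] at c2
        simp only [Fin.val_mk] at c2
        have e1 : t - 1 + 1 = t := by omega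
        rw [e1] at c2
        omega
    obtain ⟨c1, c2⟩ := hc t ht
    have hvlt : ((τ ⟨t, ht⟩ : Fin (2*n)) : ℕ) < 2*n := (τ ⟨t, ht⟩).isLt
    rcases Nat.even_or_odd t with he | ho
    · have hem : t % 2 = 0 := Nat.even_iff.mp he
      have hcase : ((τ ⟨t, ht⟩ : Fin (2*n)) : ℕ) = t ∨
          ((τ ⟨t, ht⟩ : Fin (2*n)) : ℕ) = t + 1 := by omega
      rcases hcase with h | h
      · exact Fin.ext h
      · exfalso
        set u : Fin (2*n) := τ.symm ⟨t, ht⟩ with hu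
        have huv : τ u = ⟨t, ht⟩ := Equiv.apply_symm_apply τ _
        obtain ⟨d1, d2⟩ := hc (u : ℕ) u.isLt
        rw [Fin.eta, huv] at d1
        simp only [Fin.val_mk] at d1
        have hugt : t + 1 ≤ (u : ℕ) := by
          rcases Nat.lt_trichotomy (u : ℕ) t with h' | h' | h'
          · exfalso
            have h2 := ih (u : ℕ) u.isLt h'
            rw [Fin.eta] at h2
            rw [h2] at huv
            have : (u : ℕ) = t := congrArg Fin.val huv
            omega
          · exfalso
            have : u = ⟨t, ht⟩ := Fin.ext h'
            rw [this] at huv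
            rw [huv] at h
            simp at h
          · omega
        have h3 : st (t+1) ≤ st (u : ℕ) := mono (t+1) (u : ℕ) hugt (by omega)
        omega
    · have hom : t % 2 = 1 := Nat.odd_iff.mp ho
      have hcase : ((τ ⟨t, ht⟩ : Fin (2*n)) : ℕ) = t - 1 ∨
          ((τ ⟨t, ht⟩ : Fin (2*n)) : ℕ) = t := by omega
      rcases hcase with h | h
      · exfalso
        have ht1 : t - 1 < 2*n := by omega
        have hfix := ih (t-1) ht1 (by omega)
        have heq : τ ⟨t, ht⟩ = τ ⟨t-1, ht1⟩ := by
          rw [hfix]; exact Fin.ext h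
        have := congrArg Fin.val (τ.injective heq)
        simp only [Fin.val_mk] at this
        omega
      · exact Fin.ext h
  ext x
  have key : ∀ t, ∀ (ht : t < 2*n), τ ⟨t, ht⟩ = ⟨t, ht⟩ := by
    intro t
    induction t using Nat.strong_induction_on with
    | _ t ihh => exact fun ht => main t ht (fun s hs hst => ihh s hst hs)
  have := key (x : ℕ) x.isLt
  rw [Fin.eta] at this
  simp [this]

theorem run_eq {A : Type*} {M : Type*} [Ring A] [AddCommGroup M] [Module A M]
    (n : ℕ) (b : ℕ → A) (E : ℕ → M)
    (hact : ∀ k, k < 2*n → ∀ s, s ≤ n → b k • E s = if s = k/2 then E ((k+1)/2) else 0) :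
    ∀ (m : ℕ) (h : ℕ → ℕ), (∀ t, t < m → h t < 2*n) → ∀ s, s ≤ n →
    ((∃ st : ℕ → ℕ, st 0 = s ∧ (∀ t, t < m → (h t)/2 = st t ∧ st (t+1) = (h t + 1)/2) ∧
      st m ≤ n ∧
      (List.ofFn (fun j : Fin m => b (h (m-1-(j:ℕ))))).prod • E s = E (st m))
     ∨ ((List.ofFn (fun j : Fin m => b (h (m-1-(j:ℕ))))).prod • E s = 0 ∧
        ¬∃ st : ℕ → ℕ, st 0 = s ∧ ∀ t, t < m → (h t)/2 = st t ∧ st (t+1) = (h t + 1)/2)) := by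
  intro m
  induction m with
  | zero =>
    intro h hh s hs
    left
    exact ⟨fun _ => s, rfl, fun t ht => absurd ht (by omega), hs, by simp⟩
  | succ m ih =>
    intro h hh s hs
    have hsplit : (List.ofFn (fun j : Fin (m+1) => b (h (m+1-1-(j:ℕ))))).prod
        = (List.ofFn (fun j : Fin m => b (h ((m-1-(j:ℕ))+1)))).prod * b (h 0) := by
      rw [List.ofFn_succ', List.concat_eq_append, List.prod_append]
      simp only [List.prod_cons, List.prod_nil, mul_one, Fin.val_last]
      have e1 : (fun i : Fin m => b (h (m+1-1-((i.castSucc : Fin (m+1)) : ℕ))))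
          = fun i : Fin m => b (h ((m-1-(i : ℕ))+1)) := by
        funext i
        have hi := i.isLt
        simp only [Fin.coe_castSucc]
        have e2 : m+1-1-(i : ℕ) = (m-1-(i : ℕ))+1 := by omega
        rw [e2]
      rw [e1]
      have e3 : m+1-1-m = 0 := by omega
      rw [e3]
    rw [hsplit]
    have hb0 : h 0 < 2*n := hh 0 (by omega)
    by_cases hcs : s = (h 0)/2
    · have hinner : b (h 0) • E s = E ((h 0 + 1)/2) := by
        rw [hact (h 0) hb0 s hs, if_pos hcs]
      have hs' : (h 0 + 1)/2 ≤ n := by omega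
      rcases ih (fun t => h (t+1)) (fun t ht => hh (t+1) (by omega)) ((h 0 + 1)/2) hs'
        with ⟨st', e0, ec, elast, eval⟩ | ⟨hz, hnc⟩
      · left
        refine ⟨fun t => if t = 0 then s else st' (t-1), by simp, ?_, by simpa using elast, ?_⟩
        · intro t ht
          cases t with
          | zero => simpa using ⟨hcs.symm, e0⟩
          | succ t => simpa using ec t (by omega)
        · rw [mul_smul, hinner, eval]
          simp
      · right
        constructor
        · rw [mul_smul, hinner, hz]
        · rintro ⟨st, f0, fc⟩
          refine hnc ⟨fun t => st (t+1), ?_, fun t ht => fc (t+1) (by omega)⟩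
          have := (fc 0 (by omega)).2
          simpa using this
    · right
      constructor
      · have hinner : b (h 0) • E s = 0 := by
          rw [hact (h 0) hb0 s hs, if_neg hcs]
        rw [mul_smul, hinner, smul_zero]
      · rintro ⟨st, f0, fc⟩
        exact hcs (by rw [← f0, (fc 0 (by omega)).1])


open Polynomial in
/-- Schur + cardinality: every `A`-endomorphism of a simple module is a complex scalar. -/
theorem endo_scalar (A : Type u) [Ring A] [Algebra ℂ A]
    (M : Type u) [AddCommGroup M] [Module ℂ M] [Module A M] [IsScalarTower ℂ A M]
    (hM : IsSimpleModule A M) (hA : Module.rank ℂ A < Cardinal.continuum) :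
    ∀ φ : Module.End A M, ∃ c : ℂ, ∀ m : M, φ m = c • m := by
  haveI := hM
  haveI : SMulCommClass A ℂ M := by
    constructor
    intro a c m
    rw [← algebraMap_smul A c m, ← mul_smul, ← Algebra.commutes, mul_smul, algebraMap_smul]
  letI : Algebra ℂ (Module.End A M) := Algebra.ofModule
    (fun r f g => by ext m; simp)
    (fun r f g => by
      ext m
      simp only [Module.End.mul_apply, LinearMap.smul_apply]
      rw [← algebraMap_smul A r (g m), map_smul, algebraMap_smul])
  have hnt := IsSimpleModule.nontrivial A M
  obtain ⟨m₀, hm₀⟩ := exists_ne (0 : M)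
  have hbij : ∀ g : Module.End A M, g ≠ 0 → Function.Injective g := by
    intro g hg
    rw [← LinearMap.ker_eq_bot]
    rcases eq_bot_or_eq_top (LinearMap.ker g) with h | h
    · exact h
    · exact absurd (LinearMap.ker_eq_top.mp h) hg
  have hrankEnd : Module.rank ℂ (Module.End A M) < Cardinal.continuum := by
    have h1 : Module.rank ℂ (Module.End A M) ≤ Module.rank ℂ M := by
      refine LinearMap.rank_le_of_injective
        (⟨⟨fun φ : Module.End A M => φ m₀, fun f g => rfl⟩, fun c f => rfl⟩) ?_
      intro f g hfg
      simp only [LinearMap.coe_mk, AddHom.coe_mk] at hfg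
      by_contra hne
      have hsub : f - g ≠ 0 := sub_ne_zero.mpr hne
      have hker := hbij (f - g) hsub
      have heq : (f - g) m₀ = (f - g) 0 := by
        simp [LinearMap.sub_apply, hfg]
      exact hm₀ (by simpa using hker heq)
    have h2 : Module.rank ℂ M ≤ Module.rank ℂ A := by
      refine LinearMap.rank_le_of_surjective
        (⟨⟨fun a : A => a • m₀, fun a b => add_smul a b m₀⟩, fun c a => smul_assoc c a m₀⟩) ?_
      intro x
      obtain ⟨a, ha⟩ := IsSimpleModule.toSpanSingleton_surjective A hm₀ x
      exact ⟨a, ha⟩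
    exact lt_of_le_of_lt (h1.trans h2) hA
  intro φ
  by_contra hno
  push_neg at hno
  have hg : ∀ c : ℂ, φ - c • (1 : Module.End A M) ≠ 0 := by
    intro c h
    obtain ⟨m, hm⟩ := hno c
    apply hm
    have := LinearMap.congr_fun (sub_eq_zero.mp h) m
    simpa using this
  have hFex : ∀ c : ℂ, ∃ F : Module.End A M, F * (φ - c • 1) = 1 := by
    intro c
    have hinj := hbij _ (hg c)
    have hsurj : Function.Surjective (φ - c • (1 : Module.End A M)) := by
      rw [← LinearMap.range_eq_top]
      rcases eq_bot_or_eq_top (LinearMap.range (φ - c • (1 : Module.End A M))) with h | h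
      · exfalso
        apply hg c
        ext m
        have hmem : (φ - c • (1 : Module.End A M)) m ∈ (⊥ : Submodule A M) :=
          h ▸ LinearMap.mem_range_self _ m
        simpa using hmem
      · exact h
    let e := LinearEquiv.ofBijective _ ⟨hinj, hsurj⟩
    refine ⟨e.symm.toLinearMap, ?_⟩
    ext m
    exact e.symm_apply_apply m
  choose F hF using hFex
  have key : ∀ (N : ℕ) (P : ℂ[X]), P.natDegree ≤ N → P ≠ 0 → Polynomial.aeval φ P ≠ 0 := by
    intro N
    induction N with
    | zero =>
      intro P hdeg hP
      obtain ⟨a, ha⟩ := Polynomial.natDegree_eq_zero.mp (Nat.le_zero.mp hdeg)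
      have ha0 : a ≠ 0 := by
        intro h; apply hP; rw [← ha, h, map_zero]
      rw [← ha, Polynomial.aeval_C]
      intro h
      have := LinearMap.congr_fun (h : (algebraMap ℂ (Module.End A M)) a = 0) m₀
      rw [Algebra.algebraMap_eq_smul_one] at this
      simp only [LinearMap.smul_apply, Module.End.one_apply, LinearMap.zero_apply] at this
      exact hm₀ ((smul_eq_zero.mp this).resolve_left ha0)
    | succ N ih =>
      intro P hdeg hP
      by_cases h0 : P.natDegree = 0
      · exact ih P (by omega) hP
      have hd : P.degree ≠ 0 := fun h =>
        h0 (Polynomial.natDegree_eq_zero_iff_degree_le_zero.mpr h.le)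
      obtain ⟨r, hr⟩ := IsAlgClosed.exists_root P hd
      obtain ⟨P₁, hP₁⟩ := Polynomial.dvd_iff_isRoot.mpr hr
      have hP₁0 : P₁ ≠ 0 := fun h => hP (by rw [hP₁, h, mul_zero])
      have hdeg₁ : P₁.natDegree ≤ N := by
        have hmul := Polynomial.natDegree_mul (Polynomial.X_sub_C_ne_zero r) hP₁0
        rw [← hP₁, Polynomial.natDegree_X_sub_C] at hmul
        omega
      intro hz
      apply ih P₁ hdeg₁ hP₁0
      have heval : Polynomial.aeval φ P = (φ - r • 1) * Polynomial.aeval φ P₁ := by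
        rw [hP₁, map_mul]
        congr 1
        rw [map_sub, Polynomial.aeval_X, Polynomial.aeval_C, Algebra.algebraMap_eq_smul_one]
      rw [heval] at hz
      ext m
      have happ := LinearMap.congr_fun hz m
      have hinj := hbij _ (hg r)
      simp only [Module.End.mul_apply, LinearMap.zero_apply] at happ ⊢
      apply hinj
      rw [happ, map_zero]
  have hLI : LinearIndependent ℂ F := by
    rw [linearIndependent_iff']
    intro s w hsum i hi
    by_contra hwi
    classical
    have hPne : (∑ c ∈ s, Polynomial.C (w c) * ∏ d ∈ s.erase c, (X - C d) : ℂ[X]) ≠ 0 := by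
      intro h
      have hev := congrArg (Polynomial.eval i) h
      rw [Polynomial.eval_finset_sum] at hev
      rw [Finset.sum_eq_single i] at hev
      · rw [Polynomial.eval_mul, Polynomial.eval_prod, Polynomial.eval_C] at hev
        simp only [Polynomial.eval_zero] at hev
        rcases mul_eq_zero.mp hev with h' | h'
        · exact hwi h'
        · rw [Finset.prod_eq_zero_iff] at h'
          obtain ⟨d, hd, hd0⟩ := h'
          have hdne : d ≠ i := (Finset.mem_erase.mp hd).1
          simp only [Polynomial.eval_sub, Polynomial.eval_X, Polynomial.eval_C,
            sub_eq_zero] at hd0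
          exact hdne hd0.symm
      · intro c hc hci
        rw [Polynomial.eval_mul, Polynomial.eval_prod]
        have : ∏ d ∈ s.erase c, Polynomial.eval i (X - C d) = 0 :=
          Finset.prod_eq_zero (Finset.mem_erase.mpr ⟨Ne.symm hci, hi⟩) (by simp)
        rw [this, mul_zero]
      · intro h'; exact absurd hi h'
    have haeq : Polynomial.aeval φ
        (∑ c ∈ s, Polynomial.C (w c) * ∏ d ∈ s.erase c, (X - C d) : ℂ[X]) = 0 := by
      rw [map_sum]
      have hterm : ∀ c ∈ s,
          Polynomial.aeval φ (Polynomial.C (w c) * ∏ d ∈ s.erase c, (X - C d))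
            = (w c • F c) * Polynomial.aeval φ (∏ d ∈ s, (X - C d) : ℂ[X]) := by
        intro c hc
        rw [map_mul, Polynomial.aeval_C]
        have hQc : (∏ d ∈ s, (X - C d) : ℂ[X])
            = (X - C c) * ∏ d ∈ s.erase c, (X - C d) :=
          (Finset.mul_prod_erase s _ hc).symm
        have hXC : Polynomial.aeval φ ((X - C c : ℂ[X])) = φ - c • 1 := by
          rw [map_sub, Polynomial.aeval_X, Polynomial.aeval_C,
            Algebra.algebraMap_eq_smul_one]
        rw [smul_mul_assoc]
        rw [hQc, map_mul, hXC, ← mul_assoc, hF c, one_mul, ← Algebra.smul_def]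
      rw [Finset.sum_congr rfl hterm, ← Finset.sum_mul, hsum, zero_mul]
    exact key _ _ le_rfl hPne haeq
  have hcard := hLI.cardinal_lift_le_rank
  rw [Cardinal.mk_complex, Cardinal.lift_continuum, Cardinal.lift_uzero] at hcard
  exact absurd hcard (not_le.mpr hrankEnd)


/-- Jacobson density for the case where the commutant is ℂ: can prescribe arbitrary values
on a ℂ-linearly independent family. -/
theorem density_thm (A : Type u) [Ring A] (M : Type u) [AddCommGroup M]
    [Module ℂ M] [Module A M] (hM : IsSimpleModule A M)
    (hscal : ∀ φ : Module.End A M, ∃ c : ℂ, ∀ m : M, φ m = c • m) :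
    ∀ (k : ℕ) (e : Fin k → M), LinearIndependent ℂ e → ∀ v : Fin k → M,
      ∃ a : A, ∀ i, a • e i = v i := by
  haveI := hM
  intro k
  induction k with
  | zero => exact fun e _ v => ⟨0, fun i => i.elim0⟩
  | succ k ih =>
    intro e hindep v
    have hindep' : LinearIndependent ℂ (fun i : Fin k => e i.castSucc) :=
      hindep.comp Fin.castSucc (Fin.castSucc_injective k)
    -- claim: some a kills all e i.castSucc but not e (last k)
    have claim : ∃ a : A, (∀ i : Fin k, a • e i.castSucc = 0) ∧ a • e (Fin.last k) ≠ 0 := by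
      by_contra hno
      push_neg at hno
      set π : A →ₗ[A] (Fin k → M) :=
        LinearMap.pi (fun i => LinearMap.toSpanSingleton A M (e i.castSucc)) with hπ
      set ψ : A →ₗ[A] M := LinearMap.toSpanSingleton A M (e (Fin.last k)) with hψ
      have hker : LinearMap.ker π ≤ LinearMap.ker ψ := by
        intro a ha
        rw [LinearMap.mem_ker] at ha ⊢
        have h1 : ∀ i : Fin k, a • e i.castSucc = 0 := by
          intro i
          have := congrFun ha i
          simpa [hπ, LinearMap.pi_apply, LinearMap.toSpanSingleton_apply] using this
        simpa [hψ, LinearMap.toSpanSingleton_apply] using hno a h1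
      have hsurj : Function.Surjective π := by
        intro x
        obtain ⟨a, ha⟩ := ih (fun i => e i.castSucc) hindep' x
        refine ⟨a, ?_⟩
        funext i
        simpa [hπ, LinearMap.pi_apply, LinearMap.toSpanSingleton_apply] using ha i
      set q := LinearMap.quotKerEquivOfSurjective π hsurj with hq
      set φ : (Fin k → M) →ₗ[A] M :=
        ((LinearMap.ker π).liftQ ψ hker) ∘ₗ q.symm.toLinearMap with hφ
      have hφπ : ∀ a : A, φ (π a) = ψ a := by
        intro a
        have hqa : q ((LinearMap.ker π).mkQ a) = π a := rfl
        have : q.symm (π a) = (LinearMap.ker π).mkQ a := by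
          rw [LinearEquiv.symm_apply_eq]; exact hqa.symm
        simp only [hφ, LinearMap.coe_comp, Function.comp_apply, LinearEquiv.coe_coe]
        rw [this]
        simp [Submodule.liftQ_apply, Submodule.mkQ_apply]
      -- each coordinate map is a scalar
      have hexp : e (Fin.last k) = ∑ i : Fin k,
          (Classical.choose (hscal (φ ∘ₗ LinearMap.single A (fun _ => M) i))) • e i.castSucc := by
        have h1 : π 1 = fun i => e i.castSucc := by
          funext i; simp [hπ, LinearMap.pi_apply, LinearMap.toSpanSingleton_apply]
        have h2 : φ (fun i => e i.castSucc) = e (Fin.last k) := by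
          rw [← h1, hφπ]; simp [hψ, LinearMap.toSpanSingleton_apply]
        rw [← h2]
        have h3 : (fun i => e i.castSucc) = ∑ i : Fin k, Pi.single i (e i.castSucc) := by
          funext j
          rw [Finset.sum_apply]
          simp [Pi.single_apply]
        rw [h3, map_sum]
        congr 1
        funext i
        have := Classical.choose_spec (hscal (φ ∘ₗ LinearMap.single A (fun _ => M) i))
          (e i.castSucc)
        simpa [LinearMap.comp_apply, LinearMap.single_apply] using this
      -- contradiction with linear independence
      have hsnoc : (Fin.snoc (fun i : Fin k => e i.castSucc) (e (Fin.last k)) : Fin (k+1) → M)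
          = e := by
        funext j
        induction j using Fin.lastCases with
        | last => simp
        | cast i => simp
      rw [← hsnoc] at hindep
      obtain ⟨-, hnotmem⟩ := linearIndependent_fin_snoc.mp hindep
      apply hnotmem
      rw [hexp]
      exact Submodule.sum_mem _ fun i _ =>
        Submodule.smul_mem _ _ (Submodule.subset_span ⟨i, rfl⟩)
    obtain ⟨a₀, ha₀, ha₀ne⟩ := claim
    -- the set of achievable values at e (last k) with zero on the others is a submodule
    set N : Submodule A M :=
      { carrier := {m | ∃ a : A, (∀ i : Fin k, a • e i.castSucc = 0) ∧ a • e (Fin.last k) = m}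
        add_mem' := by
          rintro m₁ m₂ ⟨a, h1, h2⟩ ⟨b, g1, g2⟩
          exact ⟨a + b, fun i => by rw [add_smul, h1 i, g1 i, add_zero],
            by rw [add_smul, h2, g2]⟩
        zero_mem' := ⟨0, fun i => zero_smul A _, zero_smul A _⟩
        smul_mem' := by
          rintro r m ⟨a, h1, h2⟩
          exact ⟨r * a, fun i => by rw [mul_smul, h1 i, smul_zero],
            by rw [mul_smul, h2]⟩ } with hN
    have hNtop : N = ⊤ := by
      rcases eq_bot_or_eq_top N with h | h
      · exfalso
        apply ha₀ne
        have : a₀ • e (Fin.last k) ∈ N := ⟨a₀, ha₀, rfl⟩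
        rw [h] at this
        simpa using this
      · exact h
    obtain ⟨b, hb⟩ := ih (fun i => e i.castSucc) hindep' (fun i => v i.castSucc)
    have hmem : v (Fin.last k) - b • e (Fin.last k) ∈ N := hNtop ▸ Submodule.mem_top
    obtain ⟨c, hc1, hc2⟩ := hmem
    refine ⟨c + b, fun i => ?_⟩
    induction i using Fin.lastCases with
    | last => rw [add_smul, hc2]; abel
    | cast i => rw [add_smul, hc1 i, hb i, zero_add]

/-- Let `A` be a unital `ℂ`-algebra with `dim_ℂ A < 2^ℵ₀`. If `A / Jac(A)` satisfies the
standard polynomial identity `S_{2n}` (i.e. all values of `S_{2n}` on `A` lie in the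
Jacobson radical), then every simple left `A`-module has `ℂ`-dimension at most `n`. -/
theorem simple_dim_le_of_standardPoly_identity_mod_jacobson
    (A : Type u) [Ring A] [Algebra ℂ A] (n : ℕ)
    (hA : Module.rank ℂ A < Cardinal.continuum)
    (hPI : ∀ a : Fin (2 * n) → A, standardPolyEval (2 * n) a ∈ (⊥ : Ideal A).jacobson)
    (M : Type u) [AddCommGroup M] [Module ℂ M] [Module A M] [IsScalarTower ℂ A M]
    (hM : IsSimpleModule A M) :
    Module.rank ℂ M ≤ (n : Cardinal) := by
  haveI := hM
  by_contra hrank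
  -- the Jacobson radical annihilates the simple module M
  have hkill : ∀ x ∈ (⊥ : Ideal A).jacobson, ∀ m : M, x • m = 0 := by
    intro x hx m
    by_cases hm : m = 0
    · simp [hm]
    · have hmax := IsSimpleModule.ker_toSpanSingleton_isMaximal A (m := m) hm
      have hle : (⊥ : Ideal A).jacobson ≤ LinearMap.ker (LinearMap.toSpanSingleton A M m) :=
        sInf_le ⟨bot_le, hmax⟩
      have := hle hx
      simpa [LinearMap.mem_ker, LinearMap.toSpanSingleton_apply] using this
  -- extract n+1 linearly independent vectors
  have hlt : ((n : Cardinal) + 1) ≤ Module.rank ℂ M :=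
    (Cardinal.add_one_le_succ _).trans (Order.succ_le_of_lt (not_le.mp hrank))
  have hle' : ((n+1 : ℕ) : Cardinal) ≤ Module.rank ℂ M := by
    push_cast
    exact hlt
  obtain ⟨s, hcard, hli⟩ := le_rank_iff_exists_linearIndependent_finset.mp hle'
  let hequiv : Fin (n+1) ≃ {x // x ∈ s} := (s.equivFin.trans (finCongr hcard)).symm
  set e : Fin (n+1) → M := fun i => (hequiv i : M) with he
  have hindep : LinearIndependent ℂ e := hli.comp hequiv hequiv.injective
  -- the operators realizing the staircase of matrix units
  set E : ℕ → M := fun t => if h : t < n+1 then e ⟨t, h⟩ else 0 with hE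
  have haex : ∀ i : Fin (2*n), ∃ a : A, ∀ r : Fin (n+1),
      a • e r = if (r : ℕ) = (i : ℕ)/2 then E (((i : ℕ)+1)/2) else 0 := by
    intro i
    obtain ⟨a, ha⟩ := density_thm A M hM (endo_scalar A M hM hA) (n+1) e hindep
      (fun r => if (r : ℕ) = (i : ℕ)/2 then E (((i : ℕ)+1)/2) else 0)
    exact ⟨a, ha⟩
  choose a ha using haex
  set b : ℕ → A := fun t => if h : t < 2*n then a ⟨t, h⟩ else 0 with hb
  have hact : ∀ k, k < 2*n → ∀ t, t ≤ n → b k • E t = if t = k/2 then E ((k+1)/2) else 0 := by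
    intro k hk t htn
    have hEt : E t = e ⟨t, by omega⟩ := by simp only [hE]; rw [dif_pos (by omega)]
    simp only [hb]
    rw [dif_pos hk, hEt, ha ⟨k, hk⟩ ⟨t, by omega⟩]
  -- evaluate the standard polynomial applied to e 0
  have hzero : standardPolyEval (2*n) a • e ⟨0, by omega⟩ = 0 :=
    hkill _ (hPI a) _
  -- per-permutation analysis
  have hterm : ∀ σ : Equiv.Perm (Fin (2*n)),
      (List.ofFn fun j => a (σ j)).prod • e ⟨0, by omega⟩
        = if σ = Fin.revPerm then e ⟨n, by omega⟩ else 0 := by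
    intro σ
    set h : ℕ → ℕ := fun t => if ht : t < 2*n then ((σ (Fin.rev ⟨t, ht⟩) : Fin (2*n)) : ℕ) else 0
      with hh
    have hhlt : ∀ t, t < 2*n → h t < 2*n := by
      intro t ht
      simp only [hh]
      rw [dif_pos ht]
      exact (σ _).isLt
    have hfun : (fun j : Fin (2*n) => b (h (2*n-1-(j:ℕ)))) = fun j => a (σ j) := by
      funext j
      have hj := j.isLt
      have h1 : 2*n-1-(j:ℕ) < 2*n := by omega
      simp only [hh, hb]
      rw [dif_pos h1]
      have hrev : Fin.rev (⟨2*n-1-(j:ℕ), h1⟩ : Fin (2*n)) = j := by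
        apply Fin.ext
        rw [Fin.val_rev]
        simp only [Fin.val_mk]
        omega
      rw [hrev, dif_pos (σ j).isLt, Fin.eta]
    have hprod : (List.ofFn (fun j : Fin (2*n) => b (h (2*n-1-(j : ℕ))))).prod
        = (List.ofFn fun j => a (σ j)).prod := by rw [hfun]
    rw [← hprod]
    have hE0 : E 0 = e ⟨0, by omega⟩ := by simp only [hE]; rw [dif_pos (by omega)]
    rcases run_eq n b E hact (2*n) h hhlt 0 (by omega) with ⟨st, hst0, hchain, hstle, hval⟩ |
      ⟨hval, hnochain⟩
    · -- a chain exists: σ must be revPerm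
      have hτ : (σ * Fin.revPerm : Equiv.Perm (Fin (2*n))) = 1 := by
        apply staircase_comb n _ st hst0
        intro t ht
        have hcht := hchain t ht
        have hht : h t = ((σ * Fin.revPerm : Equiv.Perm (Fin (2*n))) ⟨t, ht⟩ : ℕ) := by
          simp only [hh]
          rw [dif_pos ht]
          rfl
        rw [hht] at hcht
        exact hcht
      have hσ : σ = Fin.revPerm := by
        have h2 := congrArg (· * (Fin.revPerm : Equiv.Perm (Fin (2*n)))⁻¹) hτ
        have h3 : σ = (Fin.revPerm : Equiv.Perm (Fin (2*n)))⁻¹ := by simpa [mul_assoc] using h2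
        rwa [Equiv.Perm.inv_def, Fin.revPerm_symm] at h3
      rw [if_pos hσ, hE0] at *
      rw [hval]
      have hstn : st (2*n) = n := by
        rcases Nat.eq_zero_or_pos n with hn | hn
        · subst hn; simpa using hst0
        · have hlast := (hchain (2*n-1) (by omega)).2
          have hh1 : h (2*n-1) = 2*n-1 := by
            simp only [hh]
            rw [dif_pos (by omega), hσ]
            simp only [Fin.revPerm_apply, Fin.rev_rev, Fin.val_mk]
          rw [hh1] at hlast
          have h2n : 2*n-1+1 = 2*n := by omega
          rw [h2n] at hlast
          omega
      rw [hstn]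
      simp only [hE]
      rw [dif_pos (by omega)]
    · -- no chain: σ ≠ revPerm and the value is 0
      have hσne : σ ≠ Fin.revPerm := by
        intro hσ
        apply hnochain
        refine ⟨fun t => t/2, by simp, ?_⟩
        intro t ht
        have hht : h t = t := by
          simp only [hh]
          rw [dif_pos ht, hσ]
          simp only [Fin.revPerm_apply, Fin.rev_rev, Fin.val_mk]
        rw [hht]
        exact ⟨rfl, rfl⟩
      rw [if_neg hσne, ← hE0, hval]
  -- sum over permutations
  rw [standardPolyEval, Finset.sum_smul] at hzero
  have hsum : ∀ σ : Equiv.Perm (Fin (2*n)),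
      (((Equiv.Perm.sign σ : ℤˣ) : ℤ) • (List.ofFn fun i => a (σ i)).prod) • e ⟨0, by omega⟩
      = ((Equiv.Perm.sign σ : ℤˣ) : ℤ) •
          (if σ = Fin.revPerm then e ⟨n, by omega⟩ else 0) := by
    intro σ
    rw [zsmul_eq_mul, mul_smul, Int.cast_smul_eq_zsmul, hterm σ]
  rw [Finset.sum_congr rfl (fun σ _ => hsum σ)] at hzero
  rw [Finset.sum_eq_single (Fin.revPerm : Equiv.Perm (Fin (2*n)))] at hzero
  · rw [if_pos rfl] at hzero
    have hne : e ⟨n, by omega⟩ ≠ 0 := hindep.ne_zero _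
    rcases Int.units_eq_one_or (Equiv.Perm.sign (Fin.revPerm : Equiv.Perm (Fin (2*n))))
      with hs | hs
    · rw [hs] at hzero
      simp only [Units.val_one, one_smul] at hzero
      exact hne hzero
    · rw [hs] at hzero
      simp only [Units.val_neg, Units.val_one, neg_smul, one_smul, neg_eq_zero] at hzero
      exact hne hzero
  · intro σ _ hne
    rw [if_neg hne, smul_zero]
  · intro habs
    exact absurd (Finset.mem_univ _) habs
end

section
/- Let R be a ring, M a simple left R-module whose R-endomorphism ring is ℂ (acting by scalars). Then for any finite list of vectors m_1,…,m_k ∈ M with m_1,…,m_k linearly independent over ℂ, and any targets v_1,…,v_k ∈ M, there exists r ∈ R with r·m_i = v_i for all i. -/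
/-!
By the Jacobson density theorem (`jacobson_density`), on any finite subset of a semisimple
module `M` the action of `R` matches every additive map of `M` commuting with `End R M`. When
every `R`-endomorphism is a complex scalar, every `ℂ`-linear map commutes with `End R M`, and a
`ℂ`-linearly independent family can be sent to arbitrary targets by a `ℂ`-linear map.
-/

theorem LinearIndependent.exists_linearMap_apply_eq {K V V' ι : Type*} [DivisionRing K]
    [AddCommGroup V] [Module K V] [AddCommGroup V'] [Module K V']
    {m : ι → V} (hm : LinearIndependent K m) (v : ι → V') :
    ∃ g : V →ₗ[K] V', ∀ i, g (m i) = v i := by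
  obtain ⟨g, hg⟩ := LinearMap.exists_extend (Finsupp.linearCombination K v ∘ₗ hm.repr)
  refine ⟨g, fun i => ?_⟩
  have hmi : m i ∈ Submodule.span K (Set.range m) := Submodule.subset_span ⟨i, rfl⟩
  simpa [hm.repr_eq_single i ⟨m i, hmi⟩ rfl] using congr($hg ⟨m i, hmi⟩)

theorem LinearMap.exists_smul_eq_of_forall_end_eq_smul {K R M : Type*} [CommSemiring K] [Ring R]
    [AddCommGroup M] [Module K M] [Module R M] [IsSemisimpleModule R M]
    (hEnd : ∀ f : M →ₗ[R] M, ∃ c : K, ∀ x, f x = c • x) (g : M →ₗ[K] M) (s : Finset M) :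
    ∃ r : R, ∀ x ∈ s, r • x = g x := by
  let g' : Module.End (Module.End R M) M :=
    { toFun := g
      map_add' := g.map_add
      map_smul' := fun φ x => by
        obtain ⟨c, hc⟩ := hEnd φ
        simp [Module.End.smul_def, hc] }
  obtain ⟨r, hr⟩ := jacobson_density g' s
  exact ⟨r, fun x hx => (hr x hx).symm⟩

theorem jacobson_density_complex_general
    (R : Type*) [Ring R]
    (M : Type*) [AddCommGroup M] [Module ℂ M] [Module R M]
    (hM : IsSimpleModule R M)
    (hEnd : ∀ f : M →ₗ[R] M, ∃ c : ℂ, ∀ m : M, f m = c • m)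
    (k : ℕ) (m v : Fin k → M) (hind : LinearIndependent ℂ m) :
    ∃ r : R, ∀ i : Fin k, r • m i = v i := by
  classical
  obtain ⟨g, hg⟩ := hind.exists_linearMap_apply_eq v
  obtain ⟨r, hr⟩ := g.exists_smul_eq_of_forall_end_eq_smul hEnd (Finset.univ.image m)
  exact ⟨r, fun i => (hr (m i) (Finset.mem_image_of_mem m (Finset.mem_univ i))).trans (hg i)⟩

/-- Jacobson density theorem, specialized to the case where the endomorphism ring of the
simple module is `ℂ`: if `M` is a simple left `R`-module, `M` is a `ℂ`-vector space with
`ℂ`-action commuting with `R`, and every `R`-endomorphism of `M` is a complex scalar,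
then for any `ℂ`-linearly independent vectors `m_1,…,m_k ∈ M` and arbitrary targets
`v_1,…,v_k ∈ M` there is `r ∈ R` with `r • m_i = v_i` for all `i`. -/
theorem jacobson_density_complex
    (R : Type*) [Ring R]
    (M : Type*) [AddCommGroup M] [Module ℂ M] [Module R M] [SMulCommClass ℂ R M]
    (hM : IsSimpleModule R M)
    (hEnd : ∀ f : M →ₗ[R] M, ∃ c : ℂ, ∀ m : M, f m = c • m)
    (k : ℕ) (m v : Fin k → M) (hind : LinearIndependent ℂ m) :
    ∃ r : R, ∀ i : Fin k, r • m i = v i :=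
  jacobson_density_complex_general R M hM hEnd k m v hind
end

section
/- Let G be a totally disconnected locally compact group, K a compact open subgroup, and V an (algebraically) irreducible smooth representation of G over ℂ. Then the space V^K of K-fixed vectors is either zero or a simple module over the relative Hecke algebra H(G,K). -/
open MeasureTheory
open scoped BigOperators

variable {G : Type*} [Group G] [TopologicalSpace G] [MeasurableSpace G]

/-- `f : G → ℂ` belongs to the relative Hecke algebra `H(G,K)`: it is compactly
supported and bi-`K`-invariant. -/
def IsHeckeFunction (K : Subgroup G) (f : G → ℂ) : Prop :=
  HasCompactSupport f ∧ ∀ k ∈ K, ∀ g : G, f (k * g) = f g ∧ f (g * k) = f g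

/-- The action `f · v = ∫_G f(g) · (g • v) dμ` of a Hecke function on a `K`-fixed vector
of a smooth representation.  Since `f` is bi-`K`-invariant with compact support and `K`
is open, the integral is the finite sum `μ(K) Σ_{gK ∈ G/K} f(g) · (g • v)` over the
finitely many cosets meeting the support of `f`. -/
noncomputable def heckeSmoothAct (μ : Measure G) (K : Subgroup G)
    {V : Type*} [AddCommGroup V] [Module ℂ V] [DistribMulAction G V]
    (f : G → ℂ) (v : V) : V :=
  ((μ (K : Set G)).toReal : ℂ) • ∑ᶠ x : G ⧸ K, f (Quotient.out x) • ((Quotient.out x) • v)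

/-- The image of a compact set in the quotient by an open subgroup is finite. -/
lemma finite_quotient_image_aux [IsTopologicalGroup G] (K' : Subgroup G)
    (hK' : IsOpen (K' : Set G)) {C : Set G} (hC : IsCompact C) :
    Set.Finite (QuotientGroup.mk '' C : Set (G ⧸ K')) := by
  obtain ⟨t, ht⟩ := hC.elim_finite_subcover (fun c : G => {x : G | c⁻¹ * x ∈ K'})
    (fun c => hK'.preimage (continuous_const.mul continuous_id))
    (fun x _ => Set.mem_iUnion.2 ⟨x, by simpa using K'.one_mem⟩)
  refine (t.finite_toSet.image (QuotientGroup.mk : G → G ⧸ K')).subset ?_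
  rintro _ ⟨x, hx, rfl⟩
  obtain ⟨c, hc, hxc⟩ := Set.mem_iUnion₂.1 (ht hx)
  exact ⟨c, hc, QuotientGroup.eq.2 hxc⟩

set_option maxHeartbeats 1000000 in
/-- Let `G` be a totally disconnected locally compact group, `K` a compact open subgroup,
and `V` an (algebraically) irreducible smooth representation of `G` over `ℂ`.  Then `V^K`
is either zero or a simple module over the Hecke algebra `H(G,K)`: every nonzero `K`-fixed
vector `v` generates `V^K` under the Hecke action. -/
theorem heckeModule_fixedVectors_simple
    [IsTopologicalGroup G] [LocallyCompactSpace G] [TotallyDisconnectedSpace G] [BorelSpace G]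
    (μ : Measure G) [μ.IsHaarMeasure] [μ.IsMulLeftInvariant]
    (K : Subgroup G) (hKopen : IsOpen (K : Set G)) (hKcomp : IsCompact (K : Set G))
    (V : Type*) [AddCommGroup V] [Module ℂ V] [DistribMulAction G V] [SMulCommClass G ℂ V]
    (hsmooth : ∀ v : V, IsOpen {g : G | g • v = v})
    (hirr : ∀ U : Submodule ℂ V, (∀ g : G, ∀ w ∈ U, g • w ∈ U) → U = ⊥ ∨ U = ⊤) :
    ∀ v : V, (∀ k ∈ K, k • v = v) → v ≠ 0 →
      ∀ u : V, (∀ k ∈ K, k • u = u) →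
        ∃ f : G → ℂ, IsHeckeFunction K f ∧ heckeSmoothAct μ K f v = u := by
  classical
  intro v hv hvne u hu
  -- Step 1: the span of the orbit of v is all of V.
  have hUinv : ∀ g : G, ∀ w ∈ Submodule.span ℂ (Set.range fun g : G => g • v),
      g • w ∈ Submodule.span ℂ (Set.range fun g : G => g • v) := by
    intro g w hw
    induction hw using Submodule.span_induction with
    | mem x hx =>
        obtain ⟨g', rfl⟩ := hx
        exact Submodule.subset_span ⟨g * g', by simp [mul_smul]⟩
    | zero => simpa using Submodule.zero_mem _
    | add x y _ _ hx hy => simpa [smul_add] using Submodule.add_mem _ hx hy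
    | smul a x _ hx =>
        rw [smul_comm]
        exact Submodule.smul_mem _ a hx
  have humem : u ∈ Submodule.span ℂ (Set.range fun g : G => g • v) := by
    rcases hirr _ hUinv with h | h
    · exfalso
      apply hvne
      have hvmem : v ∈ Submodule.span ℂ (Set.range fun g : G => g • v) :=
        Submodule.subset_span ⟨1, one_smul _ _⟩
      rw [h] at hvmem
      simpa using hvmem
    · rw [h]; trivial
  obtain ⟨c, hc⟩ := Finsupp.mem_span_range_iff_exists_finsupp.1 humem
  set s : Finset G := c.support with hsdef
  -- Step 2: the open subgroup K₀
  set K₀ : Subgroup G := K ⊓ ⨅ a ∈ s, Subgroup.comap ((MulAut.conj a⁻¹).toMonoidHom) K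
    with hK₀def
  have hK₀leK : K₀ ≤ K := inf_le_left
  have hK₀conj : ∀ z ∈ K₀, ∀ a ∈ s, a⁻¹ * z * a ∈ K := by
    intro z hz a ha
    have h2 := (Subgroup.mem_inf.1 hz).2
    rw [Subgroup.mem_iInf] at h2
    have h3 := h2 a
    rw [Subgroup.mem_iInf] at h3
    have h4 := h3 ha
    rw [Subgroup.mem_comap] at h4
    simpa [MulAut.conj_apply, mul_assoc] using h4
  have hK₀open : IsOpen (K₀ : Set G) := by
    have hset : (K₀ : Set G) =
        (K : Set G) ∩ ⋂ a ∈ s, ((fun x => a⁻¹ * x * a) ⁻¹' (K : Set G)) := by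
      ext z
      simp only [hK₀def, Subgroup.coe_inf, Set.mem_inter_iff, SetLike.mem_coe,
        Subgroup.mem_inf, Set.mem_iInter, Set.mem_preimage, Subgroup.mem_iInf,
        Subgroup.mem_comap, MulAut.conj_apply, MonoidHom.coe_coe, inv_inv]
      constructor
      · rintro ⟨h1, h2⟩
        exact ⟨h1, fun a ha => by simpa [mul_assoc] using h2 a ha⟩
      · rintro ⟨h1, h2⟩
        exact ⟨h1, fun a ha => by simpa [mul_assoc] using h2 a ha⟩
    rw [hset]
    exact hKopen.inter (s.finite_toSet.isOpen_biInter fun a _ =>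
      hKopen.preimage ((continuous_const.mul continuous_id).mul continuous_const))
  -- Step 3: F = finite set of K₀-cosets in K
  have hFfin : Set.Finite (QuotientGroup.mk '' (K : Set G) : Set (G ⧸ K₀)) :=
    finite_quotient_image_aux K₀ hK₀open hKcomp
  set F : Finset (G ⧸ K₀) := hFfin.toFinset with hFdef
  have hmemF : ∀ k ∈ K, (QuotientGroup.mk k : G ⧸ K₀) ∈ F :=
    fun k hk => hFfin.mem_toFinset.2 ⟨k, hk, rfl⟩
  have hFout : ∀ x ∈ F, (Quotient.out x : G) ∈ K := by
    intro x hx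
    obtain ⟨k, hk, hkx⟩ := hFfin.mem_toFinset.1 hx
    have h1 : (QuotientGroup.mk k : G ⧸ K₀) = QuotientGroup.mk x.out := by
      rw [hkx, QuotientGroup.out_eq']
    have h2 : k⁻¹ * x.out ∈ K := hK₀leK (QuotientGroup.eq.1 h1)
    simpa using K.mul_mem hk h2
  set qK : G → G ⧸ K := QuotientGroup.mk with hqKdef
  set qK₀ : G → G ⧸ K₀ := QuotientGroup.mk with hqK₀def
  have hmemF' : ∀ k ∈ K, qK₀ k ∈ F := hmemF
  have houtq : ∀ x : G ⧸ K, qK x.out = x := fun x => QuotientGroup.out_eq' x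
  have houtq₀ : ∀ x : G ⧸ K₀, qK₀ x.out = x := fun x => QuotientGroup.out_eq' x
  have hqeq : ∀ w w' : G, w⁻¹ * w' ∈ K → qK w = qK w' := fun w w' h => QuotientGroup.eq.2 h
  have hqeq' : ∀ w w' : G, qK w = qK w' → w⁻¹ * w' ∈ K := fun w w' h => QuotientGroup.eq.1 h
  have hq₀eq : ∀ w w' : G, w⁻¹ * w' ∈ K₀ → qK₀ w = qK₀ w' := fun w w' h => QuotientGroup.eq.2 h
  have hq₀eq' : ∀ w w' : G, qK₀ w = qK₀ w' → w⁻¹ * w' ∈ K₀ := fun w w' h => QuotientGroup.eq.1 h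
  -- out lemmas
  have hqKout : ∀ (y : G ⧸ K) (w : G), qK w = y →
      (Quotient.out y : G) • v = w • v := by
    intro y w h
    have h2 : w⁻¹ * y.out ∈ K := hqeq' w y.out (by rw [h, houtq])
    have h3 : (Quotient.out y : G) = w * (w⁻¹ * y.out) := by group
    rw [h3, mul_smul, hv _ h2]
  have houtK₀ : ∀ w : G, ∃ z ∈ K₀, (Quotient.out (qK₀ w) : G) = w * z := by
    intro w
    have h1 : w⁻¹ * (Quotient.out (qK₀ w)) ∈ K₀ :=
      hq₀eq' w _ (by rw [houtq₀])
    exact ⟨_, h1, by group⟩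
  -- the cancellation trick: multiplying by an element of K₀ and then by a ∈ s
  have hL3 : ∀ a ∈ s, ∀ (w : G), ∀ z ∈ K₀,
      qK (w * z * a) = qK (w * a) := by
    intro a ha w z hz
    refine hqeq _ _ ?_
    have h1 : (w * z * a)⁻¹ * (w * a) = a⁻¹ * z⁻¹ * a := by group
    rw [h1]
    exact hK₀conj _ (K₀.inv_mem hz) a ha
  -- the double cosets
  set DC : G → Set G := fun a => {y : G | ∃ k ∈ K, ∃ k' ∈ K, y = k * a * k'} with hDCdef
  have hDCr : ∀ a, ∀ y ∈ DC a, ∀ k ∈ K, y * k ∈ DC a := by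
    rintro a y ⟨k₁, hk₁, k₂, hk₂, rfl⟩ k hk
    exact ⟨k₁, hk₁, k₂ * k, K.mul_mem hk₂ hk, by group⟩
  have hDCcomp : ∀ a, IsCompact (DC a) := by
    intro a
    have : DC a = (fun p : G × G => p.1 * a * p.2) '' ((K : Set G) ×ˢ (K : Set G)) := by
      ext y
      constructor
      · rintro ⟨k, hk, k', hk', rfl⟩; exact ⟨(k, k'), ⟨hk, hk'⟩, rfl⟩
      · rintro ⟨⟨k, k'⟩, ⟨hk, hk'⟩, rfl⟩; exact ⟨k, hk, k', hk', rfl⟩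
    rw [this]
    exact (hKcomp.prod hKcomp).image ((continuous_fst.mul continuous_const).mul continuous_snd)
  have hDCclosed : ∀ a, IsClosed (DC a) := by
    intro a
    rw [← isOpen_compl_iff]
    have : (DC a)ᶜ = ⋃ y ∈ (DC a)ᶜ, {x : G | y⁻¹ * x ∈ K} := by
      ext x
      constructor
      · intro hx
        exact Set.mem_biUnion hx (by simpa using K.one_mem)
      · rintro hx
        obtain ⟨y, hy, hxy⟩ := Set.mem_iUnion₂.1 hx
        intro hxDC
        apply hy
        have : y = x * (y⁻¹ * x)⁻¹ := by group
        rw [this]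
        exact hDCr a x hxDC _ (K.inv_mem hxy)
    rw [this]
    exact isOpen_biUnion fun y _ => hKopen.preimage (continuous_const.mul continuous_id)
  have hDfin : ∀ a, Set.Finite {x : G ⧸ K | (Quotient.out x : G) ∈ DC a} := by
    intro a
    refine (finite_quotient_image_aux K hKopen (hDCcomp a)).subset ?_
    intro x hx
    exact ⟨x.out, hx, QuotientGroup.out_eq' x⟩
  set D : G → Finset (G ⧸ K) := fun a => (hDfin a).toFinset with hDdef
  have hmemD : ∀ a, ∀ x : G ⧸ K, x ∈ D a ↔ (Quotient.out x : G) ∈ DC a :=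
    fun a x => (hDfin a).mem_toFinset
  -- fibers
  set fib : G → (G ⧸ K) → Finset (G ⧸ K₀) :=
    fun a y => F.filter (fun z => qK (z.out * a) = y) with hfibdef
  -- every z ∈ F maps into D a
  have hL1 : ∀ a ∈ s, ∀ z ∈ F, qK (z.out * a) ∈ D a := by
    intro a ha z hz
    rw [hmemD]
    have h2 : (z.out * a)⁻¹ * (qK (z.out * a)).out ∈ K :=
      hqeq' _ _ (by rw [houtq])
    refine ⟨z.out, hFout z hz, _, h2, by group⟩
  -- fiber over qK a is nonempty
  have hm0 : ∀ a ∈ s, qK₀ 1 ∈ fib a (qK a) := by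
    intro a ha
    rw [hfibdef]
    refine Finset.mem_filter.2 ⟨hmemF' 1 K.one_mem, ?_⟩
    obtain ⟨z, hz, hze⟩ := houtK₀ 1
    rw [hze, one_mul]
    have h := hL3 a ha 1 z hz
    rw [one_mul] at h
    have h2 : z * a = 1 * z * a := by group
    rw [h2, hL3 a ha 1 z hz, one_mul]
  -- surjectivity onto D a
  have hL5 : ∀ a ∈ s, ∀ y ∈ D a, ∃ z ∈ F, qK (z.out * a) = y := by
    intro a ha y hy
    obtain ⟨k, hk, k', hk', hye⟩ := (hmemD a y).1 hy
    refine ⟨qK₀ k, hmemF' k hk, ?_⟩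
    obtain ⟨z, hz, hze⟩ := houtK₀ k
    rw [hze, hL3 a ha k z hz]
    have h1 : qK (k * a) = qK y.out := by
      refine hqeq _ _ ?_
      rw [hye]
      have : (k * a)⁻¹ * (k * a * k') = k' := by group
      rw [this]; exact hk'
    rw [h1, houtq]
  -- general maps-to for the fiber bijection
  have hmapsgen : ∀ a ∈ s, ∀ (y₁ y₂ : G ⧸ K) (x₁ x₂ : G ⧸ K₀), x₁ ∈ fib a y₁ →
      x₂ ∈ fib a y₂ → ∀ z ∈ fib a y₁, qK₀ (x₂.out * x₁.out⁻¹ * z.out) ∈ fib a y₂ := by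
    intro a ha y₁ y₂ x₁ x₂ hx₁ hx₂ z hz
    rw [hfibdef] at hx₁ hx₂ hz ⊢
    obtain ⟨hx₁F, hx₁f⟩ := Finset.mem_filter.1 hx₁
    obtain ⟨hx₂F, hx₂f⟩ := Finset.mem_filter.1 hx₂
    obtain ⟨hzF, hzf⟩ := Finset.mem_filter.1 hz
    have hwK : x₂.out * x₁.out⁻¹ * z.out ∈ K :=
      K.mul_mem (K.mul_mem (hFout _ hx₂F) (K.inv_mem (hFout _ hx₁F))) (hFout _ hzF)
    refine Finset.mem_filter.2 ⟨hmemF' _ hwK, ?_⟩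
    obtain ⟨z₀, hz₀, hze⟩ := houtK₀ (x₂.out * x₁.out⁻¹ * z.out)
    rw [hze, hL3 a ha _ z₀ hz₀]
    -- qK (x₂.out * x₁.out⁻¹ * z.out * a) = y₂
    have hκ : (z.out * a)⁻¹ * (x₁.out * a) ∈ K := by
      refine hqeq' _ _ ?_
      rw [hzf, hx₁f]
    have key : x₂.out * x₁.out⁻¹ * z.out * a
        = x₂.out * a * ((z.out * a)⁻¹ * (x₁.out * a))⁻¹ := by group
    rw [key]
    have heq2 : qK (x₂.out * a * ((z.out * a)⁻¹ * (x₁.out * a))⁻¹)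
        = qK (x₂.out * a) := by
      refine hqeq _ _ ?_
      have h2 : (x₂.out * a * ((z.out * a)⁻¹ * (x₁.out * a))⁻¹)⁻¹ * (x₂.out * a)
          = (z.out * a)⁻¹ * (x₁.out * a) := by group
      rw [h2]; exact hκ
    rw [heq2]; exact hx₂f
  -- inverse cancellation
  have hcancel : ∀ (r : G) (z : G ⧸ K₀), qK₀ (r⁻¹ * (qK₀ (r * z.out)).out) = z := by
    intro r z
    obtain ⟨z₀, hz₀, hze⟩ := houtK₀ (r * z.out)
    rw [hze]
    have h1 : r⁻¹ * (r * z.out * z₀) = z.out * z₀ := by group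
    rw [h1]
    have h2 : (qK₀ (z.out * z₀)) = qK₀ z.out := by
      refine hq₀eq _ _ ?_
      have h3 : (z.out * z₀)⁻¹ * z.out = z₀⁻¹ * (z.out⁻¹ * z.out) := by group
      rw [h3]
      simpa using K₀.inv_mem hz₀
    rw [h2, houtq₀]
  -- fiber cardinalities are constant
  have hL6 : ∀ a ∈ s, ∀ y ∈ D a, (fib a y).card = (fib a (qK a)).card := by
    intro a ha y hy
    obtain ⟨x₂g, hx₂F, hx₂f⟩ := hL5 a ha y hy
    have hx₂ : x₂g ∈ fib a y := Finset.mem_filter.2 ⟨hx₂F, hx₂f⟩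
    have hx₁ : qK₀ 1 ∈ fib a (qK a) := hm0 a ha
    set x₁ := (qK₀ 1 : G ⧸ K₀)
    set r : G := x₁.out * x₂g.out⁻¹ with hrdef
    refine Finset.card_bij' (fun z _ => qK₀ (r * z.out)) (fun z _ => qK₀ (r⁻¹ * z.out))
      ?_ ?_ ?_ ?_
    · intro z hz
      have : qK₀ (x₁.out * x₂g.out⁻¹ * z.out) ∈ fib a (qK a) :=
        hmapsgen a ha y (qK a) x₂g x₁ hx₂ hx₁ z hz
      simpa [hrdef, mul_assoc] using this
    · intro z hz
      have : qK₀ (x₂g.out * x₁.out⁻¹ * z.out) ∈ fib a y :=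
        hmapsgen a ha (qK a) y x₁ x₂g hx₁ hx₂ z hz
      have hre : r⁻¹ = x₂g.out * x₁.out⁻¹ := by rw [hrdef]; group
      simpa [hre, mul_assoc] using this
    · intro z hz
      have := hcancel r z
      simpa using this
    · intro z hz
      have := hcancel r⁻¹ z
      simpa using this
  -- the key identity
  have hkey : ∀ a ∈ s,
      ((fib a (qK a)).card : ℂ) • ∑ y ∈ D a, (Quotient.out y : G) • v
        = ∑ z ∈ F, ((Quotient.out z : G) * a) • v := by
    intro a ha
    rw [← Finset.sum_fiberwise_of_maps_to (hL1 a ha) (fun z => ((z.out : G) * a) • v)]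
    rw [Finset.smul_sum]
    refine Finset.sum_congr rfl fun y hy => ?_
    have hconst : ∀ z ∈ fib a y, ((Quotient.out z : G) * a) • v = (Quotient.out y : G) • v :=
      fun z hz => (hqKout y _ (Finset.mem_filter.1 hz).2).symm
    calc ((fib a (qK a)).card : ℂ) • (Quotient.out y : G) • v
        = ((fib a y).card : ℂ) • (Quotient.out y : G) • v := by rw [hL6 a ha y hy]
      _ = (fib a y).card • (Quotient.out y : G) • v := by
          rw [Nat.cast_smul_eq_nsmul]
      _ = ∑ z ∈ fib a y, (Quotient.out y : G) • v := by rw [Finset.sum_const]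
      _ = ∑ z ∈ Finset.filter (fun z => qK (z.out * a) = y) F,
            ((Quotient.out z : G) * a) • v := by
          exact (Finset.sum_congr rfl fun z hz => (hconst z hz)).symm
  -- scalars
  set μKc : ℂ := (((μ (K : Set G)).toReal : ℝ) : ℂ) with hμKcdef
  have hμ : μKc ≠ 0 := by
    rw [hμKcdef]
    simp only [ne_eq, Complex.ofReal_eq_zero]
    refine ENNReal.toReal_ne_zero.2 ⟨?_, ?_⟩
    · exact (hKopen.measure_pos μ ⟨1, K.one_mem⟩).ne'
    · exact hKcomp.measure_lt_top.ne
  set N : ℕ := F.card with hNdef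
  have hN : (N : ℂ) ≠ 0 :=
    Nat.cast_ne_zero.2 (Finset.card_ne_zero_of_mem (hmemF 1 K.one_mem))
  set m : G → ℕ := fun a => (fib a (qK a)).card with hmdef
  have hm : ∀ a ∈ s, (m a : ℂ) ≠ 0 :=
    fun a ha => Nat.cast_ne_zero.2 (Finset.card_ne_zero_of_mem (hm0 a ha))
  set d : G → ℂ := fun a => c a * (m a : ℂ) / ((N : ℂ) * μKc) with hddef
  set f : G → ℂ := fun y => ∑ a ∈ s, d a * (if y ∈ DC a then 1 else 0) with hfdef
  refine ⟨f, ⟨?_, ?_⟩, ?_⟩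
  · -- compact support
    have hsupp : Function.support f ⊆ ⋃ a ∈ s, DC a := by
      intro y hy
      by_contra hyn
      apply hy
      rw [hfdef]
      refine Finset.sum_eq_zero fun a ha => ?_
      have : y ∉ DC a := fun hmem => hyn (Set.mem_biUnion ha hmem)
      simp [this]
    have hCcomp : IsCompact (⋃ a ∈ s, DC a) :=
      s.finite_toSet.isCompact_biUnion fun a _ => hDCcomp a
    have hCclosed : IsClosed (⋃ a ∈ s, DC a) :=
      s.finite_toSet.isClosed_biUnion fun a _ => hDCclosed a
    exact IsCompact.of_isClosed_subset hCcomp isClosed_closure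
      (closure_minimal hsupp hCclosed)
  · -- bi-invariance
    intro k hk g
    have hmeml : ∀ a, (k * g ∈ DC a ↔ g ∈ DC a) := by
      intro a
      constructor
      · rintro ⟨k₁, hk₁, k₂, hk₂, he⟩
        refine ⟨k⁻¹ * k₁, K.mul_mem (K.inv_mem hk) hk₁, k₂, hk₂, ?_⟩
        have : g = k⁻¹ * (k * g) := by group
        rw [this, he]; group
      · rintro ⟨k₁, hk₁, k₂, hk₂, rfl⟩
        exact ⟨k * k₁, K.mul_mem hk hk₁, k₂, hk₂, by group⟩
    have hmemr : ∀ a, (g * k ∈ DC a ↔ g ∈ DC a) := by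
      intro a
      constructor
      · rintro ⟨k₁, hk₁, k₂, hk₂, he⟩
        refine ⟨k₁, hk₁, k₂ * k⁻¹, K.mul_mem hk₂ (K.inv_mem hk), ?_⟩
        have : g = (g * k) * k⁻¹ := by group
        rw [this, he]; group
      · rintro ⟨k₁, hk₁, k₂, hk₂, rfl⟩
        exact ⟨k₁, hk₁, k₂ * k, K.mul_mem hk₂ hk, by group⟩
    have hfval : ∀ y : G, f y = ∑ a ∈ s, d a * (if y ∈ DC a then 1 else 0) :=
      fun y => rfl
    constructor
    · rw [hfval, hfval]
      refine Finset.sum_congr rfl fun a _ => ?_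
      have h2 : (if k * g ∈ DC a then (1 : ℂ) else 0) = (if g ∈ DC a then 1 else 0) :=
        if_congr (hmeml a) rfl rfl
      rw [h2]
    · rw [hfval, hfval]
      refine Finset.sum_congr rfl fun a _ => ?_
      have h2 : (if g * k ∈ DC a then (1 : ℂ) else 0) = (if g ∈ DC a then 1 else 0) :=
        if_congr (hmemr a) rfl rfl
      rw [h2]
  · -- the action equals u
    rw [heckeSmoothAct]
    have hDbig : Function.support (fun x : G ⧸ K => f x.out • ((Quotient.out x : G) • v))
        ⊆ ↑(s.biUnion D) := by
      intro x hx
      have hfx : f x.out ≠ 0 := fun h => hx (by simp [h])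
      rw [hfdef] at hfx
      obtain ⟨a, ha, hxa⟩ := Finset.exists_ne_zero_of_sum_ne_zero hfx
      have : x.out ∈ DC a := by
        by_contra hmem
        simp [hmem] at hxa
      exact Finset.mem_coe.2 (Finset.mem_biUnion.2 ⟨a, ha, (hmemD a x).2 this⟩)
    rw [finsum_eq_finset_sum_of_support_subset _ hDbig]
    have hexp : ∀ x ∈ s.biUnion D, f x.out • ((Quotient.out x : G) • v)
        = ∑ a ∈ s, (d a * (if x.out ∈ DC a then 1 else 0)) • ((Quotient.out x : G) • v) := by
      intro x _
      rw [hfdef, Finset.sum_smul]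
    rw [Finset.sum_congr rfl hexp, Finset.sum_comm]
    have hinner : ∀ a ∈ s,
        ∑ x ∈ s.biUnion D, (d a * (if x.out ∈ DC a then 1 else 0)) • ((Quotient.out x : G) • v)
          = d a • ∑ y ∈ D a, (Quotient.out y : G) • v := by
      intro a ha
      rw [Finset.smul_sum]
      refine (Finset.sum_subset (Finset.subset_biUnion_of_mem D ha) ?_).symm.trans ?_
      · intro x _ hxD
        have : x.out ∉ DC a := fun h => hxD ((hmemD a x).2 h)
        simp [this]
      · refine Finset.sum_congr rfl fun x hx => ?_
        have : x.out ∈ DC a := (hmemD a x).1 hx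
        simp [this]
    rw [Finset.sum_congr rfl hinner]
    -- use hkey
    have hstep : ∀ a ∈ s, d a • ∑ y ∈ D a, (Quotient.out y : G) • v
        = (c a / ((N : ℂ) * μKc)) • ∑ z ∈ F, ((Quotient.out z : G) * a) • v := by
      intro a ha
      have h := hkey a ha
      calc d a • ∑ y ∈ D a, (Quotient.out y : G) • v
          = (d a * (m a : ℂ)⁻¹) • ((m a : ℂ) • ∑ y ∈ D a, (Quotient.out y : G) • v) := by
            rw [smul_smul, mul_assoc, inv_mul_cancel₀ (hm a ha), mul_one]
        _ = (d a * (m a : ℂ)⁻¹) • ∑ z ∈ F, ((Quotient.out z : G) * a) • v := by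
            rw [hmdef] at *; rw [h]
        _ = (c a / ((N : ℂ) * μKc)) • ∑ z ∈ F, ((Quotient.out z : G) * a) • v := by
            congr 1
            have hdval : d a = c a * (m a : ℂ) / ((N : ℂ) * μKc) := rfl
            rw [hdval]
            have hma := hm a ha
            field_simp
    rw [Finset.sum_congr rfl hstep]
    -- pull scalars together
    rw [Finset.smul_sum]
    have hpull : ∀ a ∈ s, μKc • (c a / ((N : ℂ) * μKc)) • ∑ z ∈ F, ((Quotient.out z : G) * a) • v
        = ((N : ℂ)⁻¹ * c a) • ∑ z ∈ F, ((Quotient.out z : G) * a) • v := by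
      intro a ha
      rw [smul_smul]
      congr 1
      field_simp
    rw [Finset.sum_congr rfl hpull]
    have hswap : ∑ a ∈ s, ((N : ℂ)⁻¹ * c a) • ∑ z ∈ F, ((Quotient.out z : G) * a) • v
        = (N : ℂ)⁻¹ • ∑ z ∈ F, (Quotient.out z : G) • u := by
      have h1 : ∀ a ∈ s, ((N : ℂ)⁻¹ * c a) • ∑ z ∈ F, ((Quotient.out z : G) * a) • v
          = ∑ z ∈ F, (N : ℂ)⁻¹ • (Quotient.out z : G) • (c a • a • v) := by
        intro a ha
        rw [Finset.smul_sum]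
        refine Finset.sum_congr rfl fun z hz => ?_
        have h2 : ((Quotient.out z : G) * a) • v = (Quotient.out z : G) • (a • v) :=
          mul_smul _ _ _
        rw [h2, mul_smul]
        congr 1
        exact (smul_comm _ _ _).symm
      rw [Finset.sum_congr rfl h1, Finset.sum_comm, Finset.smul_sum]
      refine Finset.sum_congr rfl fun z hz => ?_
      rw [← Finset.smul_sum, ← Finset.smul_sum]
      have hsum : ∑ a ∈ s, c a • a • v = u := by rw [← hc]; rfl
      rw [hsum]
    rw [hswap]
    have hfix : ∀ z ∈ F, (Quotient.out z : G) • u = u := fun z hz => hu _ (hFout z hz)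
    rw [Finset.sum_congr rfl hfix, Finset.sum_const, ← hNdef,
      ← Nat.cast_smul_eq_nsmul ℂ, smul_smul, inv_mul_cancel₀ hN, one_smul]
end

section
/- Let G be a group and H a normal subgroup of finite index n. Let U be a simple ℂ[G]-module. Then there exist m ≤ n simple ℂ[H]-modules V_1, …, V_m and an injective ℂ[G]-module homomorphism (in particular injective ℂ[H]-homomorphism) from U into V_1 ⊕ ⋯ ⊕ V_m, where G acts on the direct sum by permuting and twisting the factors. In particular, U has finite length (at most n) as a ℂ[H]-module. -/
/-!
Restricted to `H`, the simple `k[G]`-module `U` is generated over `k[H]` by the finitely many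
vectors `g • u` with `g` running over coset representatives, so it has a maximal `k[H]`-submodule
`M₀`. Since `H` is normal, every translate `g • M₀` is again a maximal `k[H]`-submodule, and it
only depends on the coset `gH`. The intersection of the translates is `G`-stable and proper,
hence zero, so `U` embeds into `⨁_{gH} U ⧸ g • M₀`, a sum of at most `n` simple `k[H]`-modules;
therefore `U` has length at most `n` over `k[H]`.
-/

open scoped Pointwise MonoidAlgebra

theorem Submodule.mem_pointwise_smul_iff_inv_smul_mem {k G U : Type*} [Semiring k] [Group G]
    [AddCommMonoid U] [Module k U] [DistribMulAction G U] [SMulCommClass G k U]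
    {g : G} {W : Submodule k U} {u : U} : u ∈ g • W ↔ g⁻¹ • u ∈ W := by
  rw [← SetLike.mem_coe, Submodule.coe_pointwise_smul, Set.mem_smul_set_iff_inv_smul_mem]
  rfl

theorem Module.length_le_card_of_iInf_eq_bot {R M : Type*} [Ring R] [AddCommGroup M] [Module R M]
    {ι : Type*} [Fintype ι] (N : ι → Submodule R M) (hN : ∀ i, IsCoatom (N i))
    (h : ⨅ i, N i = ⊥) : Module.length R M ≤ Fintype.card ι := by
  have hinj : Function.Injective (LinearMap.pi fun i => (N i).mkQ) := by
    rw [← LinearMap.ker_eq_bot, LinearMap.ker_pi]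
    simpa using h
  have (i : ι) : IsSimpleModule R (M ⧸ N i) := isSimpleModule_iff_isCoatom.mpr (hN i)
  calc Module.length R M ≤ Module.length R (Π i, M ⧸ N i) := Module.length_le_of_injective _ hinj
    _ = Fintype.card ι := by simp [Module.length_eq_one]

namespace Representation

variable {k G V : Type*} [CommRing k] [Monoid G] [AddCommGroup V] [Module k V]
  (ρ : Representation k G V)

theorem mem_mapSubmodule {p : ρ.invtSubmodule} {x : ρ.asModule} :
    x ∈ ρ.mapSubmodule p ↔ ρ.asModuleEquiv x ∈ (p : Submodule k V) := by
  simp only [mapSubmodule, RelIso.coe_fn_mk, Equiv.coe_fn_mk, Submodule.mem_mk,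
    AddSubmonoid.mem_map, Submodule.mem_toAddSubmonoid]
  exact ⟨fun ⟨y, hy, hyx⟩ => hyx ▸ by simpa using hy, fun hx => ⟨_, hx, by simp⟩⟩

theorem krullDim_invtSubmodule_le_card {ι : Type*} [Fintype ι] (N : ι → ρ.invtSubmodule)
    (hN : ∀ i, IsCoatom (N i)) (h : ⨅ i, (N i : Submodule k V) = ⊥) :
    Order.krullDim ρ.invtSubmodule ≤ Fintype.card ι := by
  rw [Order.krullDim_eq_of_orderIso ρ.mapSubmodule, ← Module.coe_length]
  refine WithBot.coe_le_coe.mpr (Module.length_le_card_of_iInf_eq_bot _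
    (fun i => (ρ.mapSubmodule.isCoatom_iff _).mpr (hN i)) ?_)
  rw [eq_bot_iff]
  intro x hx
  have : ρ.asModuleEquiv x ∈ ⨅ i, (N i : Submodule k V) := by
    simpa [Submodule.mem_iInf, mem_mapSubmodule] using hx
  rw [h, Submodule.mem_bot] at this
  simpa using this

theorem finite_asModule_of_invtSubmodule_eq_top {S : Set V} (hS : S.Finite)
    (h : ∀ p ∈ ρ.invtSubmodule, S ⊆ p → p = ⊤) : Module.Finite k[G] ρ.asModule := by
  obtain ⟨p, hp⟩ := ρ.mapSubmodule.surjective (Submodule.span k[G] (ρ.asModuleEquiv.symm '' S))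
  have hSp : S ⊆ (p : Submodule k V) := fun s hs => by
    have : ρ.asModuleEquiv.symm s ∈ ρ.mapSubmodule p := hp ▸ Submodule.subset_span ⟨s, hs, rfl⟩
    simpa [mem_mapSubmodule] using this
  have hp_top : p = ⊤ := Subtype.ext (h p p.2 hSp)
  refine ⟨⟨(hS.image ρ.asModuleEquiv.symm).toFinset, ?_⟩⟩
  rw [Set.Finite.coe_toFinset, ← hp, hp_top, map_top]

theorem le_card_of_strictMono {ι : Type*} [Fintype ι] (N : ι → ρ.invtSubmodule)
    (hN : ∀ i, IsCoatom (N i)) (h : ⨅ i, (N i : Submodule k V) = ⊥) {t : ℕ}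
    (c : Fin (t + 1) → ρ.invtSubmodule) (hc : StrictMono c) : t ≤ Fintype.card ι := by
  have := (Order.LTSeries.length_le_krullDim (LTSeries.mk t c hc)).trans
    (ρ.krullDim_invtSubmodule_le_card N hN h)
  exact_mod_cast this

instance isCoatomic_invtSubmodule [Module.Finite k[G] ρ.asModule] : IsCoatomic ρ.invtSubmodule :=
  ρ.mapSubmodule.isCoatomic_iff.mpr inferInstance

theorem isCoatom_invtSubmodule_iff {p : ρ.invtSubmodule} :
    IsCoatom p ↔ (p : Submodule k V) ≠ ⊤ ∧
      ∀ W ∈ ρ.invtSubmodule, (p : Submodule k V) < W → W = ⊤ := by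
  constructor
  · rintro ⟨hne, hmax⟩
    exact ⟨fun h => hne (Subtype.ext h), fun W hW hlt => congrArg Subtype.val (hmax ⟨W, hW⟩ hlt)⟩
  · rintro ⟨hne, hmax⟩
    exact ⟨fun h => hne (congrArg Subtype.val h), fun W hlt => Subtype.ext (hmax W W.2 hlt)⟩

end Representation

open Representation

section Subgroup

variable (k : Type*) {G : Type*} (U : Type*) [CommRing k] [Group G] [AddCommGroup U] [Module k U]
  [DistribMulAction G U] [SMulCommClass G k U] (H : Subgroup G)

def subgroupRep : Representation k H U := (ofDistribMulAction k G U).comp H.subtype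

variable {k U H}

theorem mem_invtSubmodule_subgroupRep {W : Submodule k U} :
    W ∈ (subgroupRep k U H).invtSubmodule ↔ ∀ h : H, ∀ u ∈ W, (h : G) • u ∈ W := by
  simp [mem_invtSubmodule, Module.End.mem_invtSubmodule, subgroupRep, SetLike.le_def]

theorem smul_mem_invtSubmodule_subgroupRep [H.Normal] (g : G) {W : Submodule k U}
    (hW : W ∈ (subgroupRep k U H).invtSubmodule) : g • W ∈ (subgroupRep k U H).invtSubmodule := by
  rw [mem_invtSubmodule_subgroupRep] at hW ⊢
  intro h u hu
  rw [Submodule.mem_pointwise_smul_iff_inv_smul_mem] at hu ⊢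
  have hconj : g⁻¹ * h * g ∈ H := by simpa using Subgroup.Normal.conj_mem ‹_› _ h.2 g⁻¹
  simpa [mul_smul] using hW ⟨_, hconj⟩ _ hu

variable (H) in
def smulInvtSubmodule [H.Normal] (g : G) :
    (subgroupRep k U H).invtSubmodule ≃o (subgroupRep k U H).invtSubmodule where
  toFun W := ⟨g • (W : Submodule k U), smul_mem_invtSubmodule_subgroupRep g W.2⟩
  invFun W := ⟨g⁻¹ • (W : Submodule k U), smul_mem_invtSubmodule_subgroupRep g⁻¹ W.2⟩
  left_inv _ := Subtype.ext (inv_smul_smul g _)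
  right_inv _ := Subtype.ext (smul_inv_smul g _)
  map_rel_iff' := Submodule.map_le_map_iff_of_injective (MulAction.injective g) _ _

theorem smul_eq_self_of_mem_invtSubmodule {W : Submodule k U}
    (hW : W ∈ (subgroupRep k U H).invtSubmodule) (h : H) : (h : G) • W = W := by
  rw [mem_invtSubmodule_subgroupRep] at hW
  refine le_antisymm ?_ fun u hu => ?_
  · rintro _ ⟨w, hw, rfl⟩
    exact hW h w hw
  · rw [Submodule.mem_pointwise_smul_iff_inv_smul_mem]
    exact hW h⁻¹ u hu

theorem smul_eq_smul_of_mk_eq {W : Submodule k U} (hW : W ∈ (subgroupRep k U H).invtSubmodule)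
    {a b : G} (hab : (a : G ⧸ H) = b) : a • W = b • W := by
  obtain ⟨h, rfl⟩ : ∃ h : H, b = a * h :=
    ⟨⟨a⁻¹ * b, QuotientGroup.eq.mp hab⟩, (mul_inv_cancel_left a b).symm⟩
  rw [mul_smul, smul_eq_self_of_mem_invtSubmodule hW]

end Subgroup

section Simple

variable {k G U : Type*} [CommRing k] [Group G] [AddCommGroup U] [Module k U]
  [DistribMulAction G U] [SMulCommClass G k U]

theorem iInf_smul_eq_bot_of_ne_top
    (hsimple : ∀ W : Submodule k U, (∀ g : G, ∀ u ∈ W, g • u ∈ W) → W = ⊥ ∨ W = ⊤)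
    {W : Submodule k U} (hW : W ≠ ⊤) : ⨅ g : G, g • W = ⊥ := by
  refine (hsimple _ fun g u hu => ?_).resolve_right fun htop => hW ?_
  · rw [Submodule.mem_iInf] at hu ⊢
    intro g'
    have := Submodule.smul_mem_pointwise_smul _ g _ (hu (g⁻¹ * g'))
    rwa [← mul_smul, mul_inv_cancel_left] at this
  · rw [eq_top_iff, ← htop]
    simpa using iInf_le (fun g : G => g • W) 1

theorem span_orbit_eq_top
    (hsimple : ∀ W : Submodule k U, (∀ g : G, ∀ u ∈ W, g • u ∈ W) → W = ⊥ ∨ W = ⊤)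
    {u : U} (hu : u ≠ 0) : Submodule.span k (Set.range fun g : G => g • u) = ⊤ := by
  refine (hsimple _ fun g v hv => ?_).resolve_left fun hbot => hu ?_
  · have := Submodule.smul_mem_pointwise_smul _ g _ hv
    rw [← Submodule.span_smul] at this
    refine Submodule.span_mono ?_ this
    rintro _ ⟨_, ⟨g', rfl⟩, rfl⟩
    exact ⟨g * g', mul_smul _ _ _⟩
  · have : u ∈ Submodule.span k (Set.range fun g : G => g • u) :=
      Submodule.subset_span ⟨1, one_smul G u⟩
    simpa [hbot] using this

theorem finite_asModule_subgroupRep {H : Subgroup G} [H.Normal] [Finite (G ⧸ H)] [Nontrivial U]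
    (hsimple : ∀ W : Submodule k U, (∀ g : G, ∀ u ∈ W, g • u ∈ W) → W = ⊥ ∨ W = ⊤) :
    Module.Finite k[H] (subgroupRep k U H).asModule := by
  obtain ⟨u, hu⟩ := exists_ne (0 : U)
  refine (subgroupRep k U H).finite_asModule_of_invtSubmodule_eq_top
    (Set.finite_range fun q : G ⧸ H => q.out • u) fun p hp hup => ?_
  rw [eq_top_iff, ← span_orbit_eq_top hsimple hu, Submodule.span_le]
  rintro _ ⟨g, rfl⟩
  have hg : g * (g : G ⧸ H).out⁻¹ ∈ H :=
    Subgroup.Normal.mem_comm ‹_› (QuotientGroup.eq.mp (QuotientGroup.out_eq' (g : G ⧸ H)))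
  simpa [smul_smul] using mem_invtSubmodule_subgroupRep.mp hp ⟨_, hg⟩ _ (hup ⟨g, rfl⟩)

end Simple

/-- Let `H` be a normal subgroup of finite index `n` of a group `G`, and `U` a simple
`ℂ[G]`-module.  Then there are `m ≤ n` maximal `H`-stable subspaces `M_1, …, M_m` of `U`
(so that each quotient `U/M_i` is a simple `ℂ[H]`-module), permuted by the `G`-action,
with `⨅ M_i = ⊥`; hence `u ↦ ⊕ᵢ (u + M_i)` is an injective `G`-equivariant map of `U`
into the direct sum of the simple `ℂ[H]`-modules `V_i = U/M_i` (on which `G` acts by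
permuting and twisting the factors).  In particular `U` has length at most `n` as a
`ℂ[H]`-module. -/
theorem simpleModule_embeds_in_sum_of_simples
    {G : Type*} [Group G] (H : Subgroup G) [H.Normal] (n : ℕ)
    (hn : H.index = n) (hn0 : n ≠ 0)
    (U : Type*) [AddCommGroup U] [Module ℂ U] [DistribMulAction G U] [SMulCommClass G ℂ U]
    (hUnontriv : Nontrivial U)
    (hUsimple : ∀ W : Submodule ℂ U, (∀ g : G, ∀ u ∈ W, g • u ∈ W) → W = ⊥ ∨ W = ⊤) :
    ∃ m : ℕ, m ≤ n ∧ ∃ M : Fin m → Submodule ℂ U,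
      (∀ i, ∀ h : H, ∀ u ∈ M i, (h : G) • u ∈ M i) ∧
      (∀ i, M i ≠ ⊤ ∧ ∀ W : Submodule ℂ U,
        (∀ h : H, ∀ u ∈ W, (h : G) • u ∈ W) → M i < W → W = ⊤) ∧
      (⨅ i, M i) = ⊥ ∧
      (∀ g : G, ∀ i, ∃ j, (M i).map (DistribMulAction.toLinearMap ℂ U g) = M j) ∧
      (∀ c : Fin (n + 2) → Submodule ℂ U,
        (∀ i, ∀ h : H, ∀ u ∈ c i, (h : G) • u ∈ c i) → ¬ StrictMono c) := by
  have : H.FiniteIndex := ⟨hn ▸ hn0⟩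
  have := finite_asModule_subgroupRep (H := H) hUsimple
  obtain ⟨M₀, hM₀⟩ := IsCoatomic.exists_coatom (subgroupRep ℂ U H).invtSubmodule
  let e : G ⧸ H ≃ Fin n := Finite.equivFinOfCardEq hn
  let M (i : Fin n) : (subgroupRep ℂ U H).invtSubmodule := smulInvtSubmodule H (e.symm i).out M₀
  have hM (g : G) : (M (e g) : Submodule ℂ U) = g • (M₀ : Submodule ℂ U) := by
    simpa [M, smulInvtSubmodule] using smul_eq_smul_of_mk_eq M₀.2 (QuotientGroup.out_eq' (g : G ⧸ H))
  have hMcoatom (i : Fin n) : IsCoatom (M i) := ((smulInvtSubmodule H _).isCoatom_iff _).mpr hM₀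
  have hinf : ⨅ i, (M i : Submodule ℂ U) = ⊥ := by
    refine eq_bot_iff.mpr (le_of_le_of_eq ?_ (iInf_smul_eq_bot_of_ne_top hUsimple
      ((isCoatom_invtSubmodule_iff _).mp hM₀).1))
    exact le_iInf fun g => (iInf_le _ (e g)).trans_eq (hM g)
  refine ⟨n, le_rfl, fun i => M i, fun i => mem_invtSubmodule_subgroupRep.mp (M i).2,
    fun i => ?_, hinf, fun g i => ⟨e (g * (e.symm i).out), ?_⟩, fun c hc hmono => ?_⟩
  · simpa [mem_invtSubmodule_subgroupRep] using (isCoatom_invtSubmodule_iff _).mp (hMcoatom i)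
  · change g • (M i : Submodule ℂ U) = M (e (g * (e.symm i).out : G))
    rw [hM, mul_smul]
    rfl
  · simpa using (subgroupRep ℂ U H).le_card_of_strictMono M hMcoatom hinf
      (fun i => ⟨c i, mem_invtSubmodule_subgroupRep.mpr (hc i)⟩) fun _ _ hij => hmono hij
end
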